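/- For every natural number n and every k with 2k + 1 ≥ n and k + 1 ≤ n, the up operator U maps V(B(n)_k) surjectively onto V(B(n)_{k+1}). -/

import Mathlib

/-- `V n` is the complex vector space with basis `B(n)`, the set of all
subsets of `[n] = {1, …, n}` (modeled as `Finset (Fin n)`). -/
abbrev V (n : ℕ) : Type := Finset (Fin n) →₀ ℂ

/-- `V(B(n)_k)`: the span of the `k`-subsets of `[n]`, i.e. the elements of
`V n` supported on subsets of cardinality `k`. -/
noncomputable def rankSubmodule (n k : ℕ) : Submodule ℂ (V n) :=
  Finsupp.supported ℂ ℂ {X : Finset (Fin n) | X.card = k}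

/-- The up operator `U : V(B(n)) → V(B(n))`, defined on a basis element `X` by
`U(X) = Σ_Y Y`, the sum over all `Y ⊆ [n]` with `X ⊆ Y` and `|Y| = |X| + 1`. -/
noncomputable def upMap (n : ℕ) : V n →ₗ[ℂ] V n :=
  Finsupp.lift (V n) ℂ (Finset (Fin n)) fun X =>
    ∑ Y ∈ Finset.univ.filter (fun Y : Finset (Fin n) => X ⊆ Y ∧ Y.card = X.card + 1),
      Finsupp.single Y (1 : ℂ)

/-- `IsSJC n k h v` : `(v 0, v 1, …, v (h-1))` is a symmetric Jordan chain in
`V(B(n))`: a sequence of `h ≥ 1` nonzero homogeneous elements, `v i` of rank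
`k + i`, with `U (v i) = v (i+1)`, `U (v (h-1)) = 0`, and the symmetry condition
`r(v_1) + r(v_h) = n` (which for `h = 1` reads `2 r(v_1) = n`). -/
def IsSJC (n k h : ℕ) (v : ℕ → V n) : Prop :=
  1 ≤ h ∧
  (∀ i < h, v i ≠ 0 ∧ v i ∈ rankSubmodule n (k + i)) ∧
  (∀ i, i + 1 < h → upMap n (v i) = v (i + 1)) ∧
  upMap n (v (h - 1)) = 0 ∧
  k + (k + (h - 1)) = n

/-- The inclusion `V(B(n)) ≃ V(0) ⊆ V(B(n+1))` induced by regarding a subset of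
`[n]` as a subset of `[n+1]` not containing `n+1`. -/
noncomputable def inclMap (n : ℕ) : V n →ₗ[ℂ] V (n + 1) :=
  Finsupp.lmapDomain ℂ ℂ (fun X : Finset (Fin n) =>
    X.map ⟨Fin.castSucc, Fin.castSucc_injective n⟩)

/-- The map `R : V(0) → V(B(n+1))`, `R(v) = v̄`, induced by
`X ↦ X ∪ {n+1}` for `X ⊆ [n]` (here `V(0) ≅ V(B(n))`). -/
noncomputable def barMap (n : ℕ) : V n →ₗ[ℂ] V (n + 1) :=
  Finsupp.lmapDomain ℂ ℂ (fun X : Finset (Fin n) =>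
    insert (Fin.last n) (X.map ⟨Fin.castSucc, Fin.castSucc_injective n⟩))

/-!
Let `D` be the down operator, sending a set to the sum of its subsets with one element fewer.
Its matrix is the transpose of that of `U`, so `D` is the adjoint of `U` for the standard
Hermitian form, and on basis vectors one checks `DU - UD = (n - 2m) • id` on `V(B(n)_m)`.
For `m > n / 2` this makes `UD` injective on `V(B(n)_m)`: if `UDf = 0` then `‖Df‖² = 0`, so
`DUf = (n - 2m) • f`, and `‖Uf‖² + (2m - n) ‖f‖² = 0` forces `f = 0`. By finite dimension `UD` is
then onto `V(B(n)_m)`, so every `w` of rank `m = k + 1` is `U (D f)` with `D f` of rank `k`.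
-/

open Finset Matrix

theorem Finset.covBy_iff_subset_and_card_eq {α : Type*} [DecidableEq α] {s t : Finset α} :
    s ⋖ t ↔ s ⊆ t ∧ t.card = s.card + 1 := by
  rw [covBy_iff_card_sdiff_eq_one, and_congr_right_iff]
  intro hst
  have := card_le_card hst
  rw [card_sdiff_of_subset hst]
  omega

theorem Finsupp.finsetSum_single_apply {α M : Type*} [DecidableEq α] [AddCommMonoid M]
    (s : Finset α) (c : M) (a : α) :
    (∑ b ∈ s, Finsupp.single b c) a = if a ∈ s then c else 0 := by
  simp [Finsupp.finsetSum_apply, Finsupp.single_apply]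

theorem Finsupp.coe_lift_eq_mulVec {ι κ R : Type*} [Fintype ι] [CommSemiring R]
    (g : ι → κ →₀ R) (f : ι →₀ R) :
    ⇑(Finsupp.lift (κ →₀ R) R ι g f) = Matrix.of (fun k i => g i k) *ᵥ ⇑f := by
  ext k
  simp [Finsupp.sum_fintype, mulVec, dotProduct, mul_comm]

section UpDown

variable {n : ℕ}

noncomputable def downMap (n : ℕ) : V n →ₗ[ℂ] V n :=
  Finsupp.lift (V n) ℂ (Finset (Fin n)) fun Y =>
    ∑ X ∈ univ.filter (fun X : Finset (Fin n) => X ⊆ Y ∧ Y.card = X.card + 1),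
      Finsupp.single X (1 : ℂ)

noncomputable def upMatrix (n : ℕ) : Matrix (Finset (Fin n)) (Finset (Fin n)) ℂ :=
  Matrix.of fun Y X => if X ⊆ Y ∧ Y.card = X.card + 1 then 1 else 0

theorem coe_upMap (f : V n) : ⇑(upMap n f) = upMatrix n *ᵥ ⇑f := by
  rw [upMap, Finsupp.coe_lift_eq_mulVec]
  congr 1
  ext Y X
  simp [upMatrix, Finsupp.finsetSum_single_apply]

theorem coe_downMap (f : V n) : ⇑(downMap n f) = (upMatrix n)ᵀ *ᵥ ⇑f := by
  rw [downMap, Finsupp.coe_lift_eq_mulVec]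
  congr 1
  ext X Y
  simp [upMatrix, Finsupp.finsetSum_single_apply]

theorem conjTranspose_upMatrix : (upMatrix n)ᴴ = (upMatrix n)ᵀ := by
  ext X Y
  simp [upMatrix, apply_ite]

theorem star_upMap_dotProduct (f g : V n) :
    star ⇑(upMap n f) ⬝ᵥ ⇑g = star ⇑f ⬝ᵥ ⇑(downMap n g) := by
  rw [coe_upMap, coe_downMap, star_mulVec, conjTranspose_upMatrix, dotProduct_mulVec]

theorem star_downMap_dotProduct (f g : V n) :
    star ⇑(downMap n f) ⬝ᵥ ⇑g = star ⇑f ⬝ᵥ ⇑(upMap n g) := by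
  rw [coe_upMap, coe_downMap, star_mulVec, conjTranspose_transpose_eq_transpose_conjTranspose,
    conjTranspose_upMatrix, transpose_transpose, dotProduct_mulVec]

theorem upMap_single (X : Finset (Fin n)) :
    upMap n (Finsupp.single X 1) = ∑ a ∈ Xᶜ, Finsupp.single (insert a X) 1 := by
  have hcovers : univ.filter (fun Y : Finset (Fin n) => X ⊆ Y ∧ Y.card = X.card + 1)
      = Xᶜ.image (insert · X) := by
    ext Y
    simp [← covBy_iff_subset_and_card_eq, covBy_iff_exists_insert]
  rw [upMap, Finsupp.lift_apply, Finsupp.sum_single_index (by simp), one_smul, hcovers,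
    sum_image]
  intro a ha b _ hab
  simpa [mem_compl.1 ha] using congrArg (a ∈ ·) hab

theorem downMap_single (Y : Finset (Fin n)) :
    downMap n (Finsupp.single Y 1) = ∑ b ∈ Y, Finsupp.single (Y.erase b) 1 := by
  have hcovered : univ.filter (fun X : Finset (Fin n) => X ⊆ Y ∧ Y.card = X.card + 1)
      = Y.image (Y.erase ·) := by
    ext X
    simp [← covBy_iff_subset_and_card_eq, covBy_iff_exists_erase]
  rw [downMap, Finsupp.lift_apply, Finsupp.sum_single_index (by simp), one_smul, hcovered,
    sum_image]
  intro a ha b _ hab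
  by_contra hne
  simpa [hne, mem_coe.1 ha] using congrArg (a ∈ ·) hab

theorem rankSubmodule_eq_span (m : ℕ) :
    rankSubmodule n m
      = Submodule.span ℂ ((Finsupp.single · 1) '' {X : Finset (Fin n) | X.card = m}) :=
  Finsupp.supported_eq_span_single ℂ _

theorem rankSubmodule_le_comap {L : V n →ₗ[ℂ] V n} {m m' : ℕ}
    (h : ∀ X : Finset (Fin n), X.card = m → L (Finsupp.single X 1) ∈ rankSubmodule n m') :
    rankSubmodule n m ≤ (rankSubmodule n m').comap L := by
  rw [rankSubmodule_eq_span m, Submodule.span_le]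
  rintro _ ⟨X, hX, rfl⟩
  exact h X hX

theorem upMap_mem_rankSubmodule {m : ℕ} {f : V n} (hf : f ∈ rankSubmodule n m) :
    upMap n f ∈ rankSubmodule n (m + 1) := by
  refine rankSubmodule_le_comap (fun X hX => ?_) hf
  rw [upMap_single]
  refine Submodule.sum_mem _ fun a ha => Finsupp.single_mem_supported ℂ _ ?_
  simp [card_insert_of_notMem (mem_compl.1 ha), hX]

theorem downMap_mem_rankSubmodule {m : ℕ} {f : V n} (hf : f ∈ rankSubmodule n (m + 1)) :
    downMap n f ∈ rankSubmodule n m := by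
  refine rankSubmodule_le_comap (fun Y hY => ?_) hf
  rw [downMap_single]
  refine Submodule.sum_mem _ fun b hb => Finsupp.single_mem_supported ℂ _ ?_
  simp [card_erase_of_mem hb, hY]

theorem downMap_upMap_single_add (X : Finset (Fin n)) :
    downMap n (upMap n (Finsupp.single X 1)) + X.card • Finsupp.single X 1
      = upMap n (downMap n (Finsupp.single X 1)) + Xᶜ.card • Finsupp.single X 1 := by
  have hDU : ∀ a ∈ Xᶜ, downMap n (Finsupp.single (insert a X) 1)
      = Finsupp.single X 1 + ∑ b ∈ X, Finsupp.single (insert a (X.erase b)) 1 := by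
    intro a ha
    have ha : a ∉ X := mem_compl.1 ha
    rw [downMap_single, sum_insert ha, erase_insert ha]
    congr 1
    refine sum_congr rfl fun b hb => ?_
    rw [erase_insert_of_ne (ne_of_mem_of_not_mem hb ha).symm]
  have hUD : ∀ b ∈ X, upMap n (Finsupp.single (X.erase b) 1)
      = Finsupp.single X 1 + ∑ a ∈ Xᶜ, Finsupp.single (insert a (X.erase b)) 1 := by
    intro b hb
    rw [upMap_single, compl_erase, sum_insert (by simpa using hb), insert_erase hb]
  rw [upMap_single, downMap_single, map_sum, map_sum, sum_congr rfl hDU, sum_congr rfl hUD,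
    sum_add_distrib, sum_add_distrib, sum_const, sum_const, sum_comm]
  abel

theorem downMap_upMap_add_of_mem_rankSubmodule {m : ℕ} {f : V n}
    (hf : f ∈ rankSubmodule n m) :
    downMap n (upMap n f) + m • f = upMap n (downMap n f) + (n - m) • f := by
  rw [rankSubmodule_eq_span] at hf
  refine LinearMap.eqOn_span (f := downMap n ∘ₗ upMap n + m • LinearMap.id)
    (g := upMap n ∘ₗ downMap n + (n - m) • LinearMap.id) ?_ hf
  rintro _ ⟨X, rfl, rfl⟩
  simpa [card_compl] using downMap_upMap_single_add X

open scoped ComplexOrder in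
theorem eq_zero_of_upMap_downMap_eq_zero {m : ℕ} (hm : n < 2 * m) {f : V n}
    (hf : f ∈ rankSubmodule n m) (hUD : upMap n (downMap n f) = 0) : f = 0 := by
  have hD : downMap n f = 0 := by
    rw [← Finsupp.coe_eq_zero, ← dotProduct_star_self_eq_zero, star_downMap_dotProduct, hUD]
    simp
  obtain ⟨d, hd⟩ : ∃ d, m = (n - m) + (d + 1) := ⟨m - (n - m) - 1, by omega⟩
  have hDU : downMap n (upMap n f) + (d + 1) • f = 0 := by
    have := downMap_upMap_add_of_mem_rankSubmodule hf
    rw [hD, map_zero, zero_add, show m • f = (n - m) • f + (d + 1) • f by rw [← add_nsmul, ← hd],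
      add_left_comm] at this
    exact add_eq_left.1 this
  have hnorms : star ⇑(upMap n f) ⬝ᵥ ⇑(upMap n f) + (d + 1) • (star ⇑f ⬝ᵥ ⇑f) = 0 := by
    rw [star_upMap_dotProduct, ← dotProduct_smul, ← dotProduct_add, ← Finsupp.coe_smul,
      ← Finsupp.coe_add, hDU]
    simp
  have hf0 := (add_eq_zero_iff_of_nonneg (dotProduct_star_self_nonneg _)
    (nsmul_nonneg (dotProduct_star_self_nonneg _) _)).1 hnorms
  rw [← Finsupp.coe_eq_zero, ← dotProduct_star_self_eq_zero]
  exact (smul_eq_zero.1 hf0.2).resolve_left d.succ_ne_zero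

theorem surjOn_upMap_comp_downMap {m : ℕ} (hm : n ≤ 2 * m + 1) :
    Set.SurjOn (upMap n ∘ₗ downMap n) (rankSubmodule n (m + 1)) (rankSubmodule n (m + 1)) := by
  refine (LinearMap.injOn_iff_surjOn (f := upMap n ∘ₗ downMap n)
    fun _ hf => upMap_mem_rankSubmodule (downMap_mem_rankSubmodule hf)).1 fun f hf g hg hfg => ?_
  rw [← sub_eq_zero]
  refine eq_zero_of_upMap_downMap_eq_zero (by omega) (Submodule.sub_mem _ hf hg) ?_
  simpa [sub_eq_zero] using hfg

end UpDown

theorem upMap_surjOn_upper_half_general (n k : ℕ) (h1 : n ≤ 2 * k + 1) :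
    ∀ w ∈ rankSubmodule n (k + 1), ∃ v ∈ rankSubmodule n k, upMap n v = w := by
  intro w hw
  obtain ⟨f, hf, rfl⟩ := surjOn_upMap_comp_downMap h1 hw
  exact ⟨downMap n f, downMap_mem_rankSubmodule hf, rfl⟩

/-- **Theorem.** For every `n` and every `k` with `2k + 1 ≥ n` and `k + 1 ≤ n`, the up
operator `U` maps `V(B(n)_k)` surjectively onto `V(B(n)_{k+1})`. -/
theorem upMap_surjOn_upper_half (n k : ℕ) (h1 : n ≤ 2 * k + 1) (h2 : k + 1 ≤ n) :
    ∀ w ∈ rankSubmodule n (k + 1), ∃ v ∈ rankSubmodule n k, upMap n v = w :=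
  upMap_surjOn_upper_half_general n k h1
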